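/- Let P, Q, R ⊆ ℝ^d be nonempty polytopes with P + Q = R, and let c_1, …, c_d ∈ ℝ^d form a basis of ℝ^d. Define iterated face sets F^P_0 = P and F^P_i = argmax_{x ∈ F^P_{i-1}} c_iᵀx for i = 1, …, d, and analogously F^Q_i and F^R_i for Q and R. Then F^P_d, F^Q_d, and F^R_d are singletons {x^P}, {x^Q}, {x^R}, respectively, and x^P + x^Q = x^R. -/

import Mathlib

open Finset Pointwise

def IsPolytope {d : ℕ} (P : Set (Fin d → ℝ)) : Prop :=
  ∃ V : Finset (Fin d → ℝ), V.Nonempty ∧ P = convexHull ℝ (V : Set (Fin d → ℝ))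

noncomputable def suppFn {d : ℕ} (P : Set (Fin d → ℝ)) (c : Fin d → ℝ) : ℝ :=
  sSup ((fun x => ∑ m, c m * x m) '' P)

def HasExtFormOfSize {d : ℕ} (P : Set (Fin d → ℝ)) (m : ℕ) : Prop :=
  ∃ (e m' : ℕ) (A : Matrix (Fin m) (Fin e) ℝ) (b : Fin m → ℝ)
    (C : Matrix (Fin m') (Fin e) ℝ) (d' : Fin m' → ℝ)
    (π : (Fin e → ℝ) →ᵃ[ℝ] (Fin d → ℝ)),
    π '' {y | A.mulVec y ≤ b ∧ C.mulVec y = d'} = P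

noncomputable def xc {d : ℕ} (P : Set (Fin d → ℝ)) : ℕ :=
  sInf {m | HasExtFormOfSize P m}

def MaxoutComputes {d : ℕ} (k s : ℕ) (a : Fin s → Fin k → Fin d → ℝ)
    (w : Fin s → Fin k → Fin s → ℝ) (f : (Fin d → ℝ) → ℝ) : Prop :=
  ∃ (z : Fin s → (Fin d → ℝ) → ℝ) (hs : 0 < s),
    (∀ j x, IsGreatest (Set.range fun i : Fin k =>
        ∑ m, a j i m * x m +
        ∑ l ∈ Finset.univ.filter (fun l => l < j), w j i l * z l x) (z j x)) ∧
    f = z ⟨s - 1, Nat.sub_lt hs Nat.one_pos⟩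

def IsMaxoutNetwork {d : ℕ} (k s : ℕ) (f : (Fin d → ℝ) → ℝ) : Prop :=
  ∃ (a : Fin s → Fin k → Fin d → ℝ) (w : Fin s → Fin k → Fin s → ℝ),
    MaxoutComputes k s a w f

def IsMonotoneMaxoutNetwork {d : ℕ} (k s : ℕ) (f : (Fin d → ℝ) → ℝ) : Prop :=
  ∃ (a : Fin s → Fin k → Fin d → ℝ) (w : Fin s → Fin k → Fin s → ℝ),
    (∀ j i m, 0 ≤ a j i m) ∧ (∀ j i l, 0 ≤ w j i l) ∧ MaxoutComputes k s a w f

def epiSet {d : ℕ} (f : (Fin d → ℝ) → ℝ) : Set (Fin (d + 1) → ℝ) :=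
  {p | f (fun m => p m.castSucc) ≤ p (Fin.last d)}

def argmaxSet {d : ℕ} (c : Fin d → ℝ) (S : Set (Fin d → ℝ)) : Set (Fin d → ℝ) :=
  {x | x ∈ S ∧ ∀ y ∈ S, ∑ m, c m * y m ≤ ∑ m, c m * x m}

def iterFaces {d : ℕ} (c : Fin d → Fin d → ℝ) (S : Set (Fin d → ℝ)) : ℕ → Set (Fin d → ℝ)
  | 0 => S
  | i + 1 => if h : i < d then argmaxSet (c ⟨i, h⟩) (iterFaces c S i) else iterFaces c S i

noncomputable def vxc {d : ℕ} (P : Set (Fin d → ℝ)) : ℕ :=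
  sInf {m | ∃ Q R : Set (Fin d → ℝ), IsPolytope Q ∧ IsPolytope R ∧ P + Q = R ∧ m = xc Q + xc R}

def coneGen {d : ℕ} (S : Set (Fin d → ℝ)) : Set (Fin d → ℝ) :=
  ⋂₀ {K | S ⊆ K ∧ Convex ℝ K ∧ ∀ x ∈ K, ∀ t : ℝ, 0 < t → t • x ∈ K}

def polarCone {d : ℕ} (K : Set (Fin d → ℝ)) : Set (Fin d → ℝ) :=
  {z | ∀ y ∈ K, ∑ i, z i * y i ≤ 0}

/-!
A linear functional attains its maximum on a Minkowski sum `P + Q` exactly at the sums of its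
maximizers on `P` and on `Q`, so for compact nonempty summands the lexicographic faces commute
with Minkowski sums. The last face is a single point: any two of its points have the same value
under every `c i`, and the `c i` span `ℝ^d`.
-/

open Matrix

section Argmax

variable {d : ℕ}

theorem mem_argmaxSet {c x : Fin d → ℝ} {S : Set (Fin d → ℝ)} :
    x ∈ argmaxSet c S ↔ x ∈ S ∧ ∀ y ∈ S, c ⬝ᵥ y ≤ c ⬝ᵥ x :=
  Iff.rfl

theorem isCompact_argmaxSet {S : Set (Fin d → ℝ)} (hS : IsCompact S) (c : Fin d → ℝ) :
    IsCompact (argmaxSet c S) := by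
  have h : argmaxSet c S = S ∩ ⋂ y ∈ S, {x | c ⬝ᵥ y ≤ c ⬝ᵥ x} := by
    ext x
    simp [mem_argmaxSet]
  rw [h]
  exact hS.inter_right (isClosed_biInter fun y _ => isClosed_le continuous_const (by fun_prop))

theorem argmaxSet_nonempty {S : Set (Fin d → ℝ)} (hS : IsCompact S) (hne : S.Nonempty)
    (c : Fin d → ℝ) : (argmaxSet c S).Nonempty := by
  obtain ⟨x, hx, hmax⟩ := hS.exists_isMaxOn hne (f := (c ⬝ᵥ ·)) (by fun_prop)
  exact ⟨x, hx, fun y hy => hmax hy⟩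

theorem argmaxSet_add {P Q : Set (Fin d → ℝ)} (c : Fin d → ℝ) (hP : (argmaxSet c P).Nonempty)
    (hQ : (argmaxSet c Q).Nonempty) :
    argmaxSet c (P + Q) = argmaxSet c P + argmaxSet c Q := by
  obtain ⟨p₀, hp₀ : p₀ ∈ P, hp₀max : ∀ y ∈ P, c ⬝ᵥ y ≤ c ⬝ᵥ p₀⟩ := hP
  obtain ⟨q₀, hq₀ : q₀ ∈ Q, hq₀max : ∀ y ∈ Q, c ⬝ᵥ y ≤ c ⬝ᵥ q₀⟩ := hQ
  ext z
  simp only [Set.mem_add, mem_argmaxSet]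
  constructor
  · rintro ⟨⟨p, hp, q, hq, rfl⟩, hmax⟩
    have hsum := hmax (p₀ + q₀) ⟨p₀, hp₀, q₀, hq₀, rfl⟩
    have hp_le := hp₀max p hp
    have hq_le := hq₀max q hq
    rw [dotProduct_add, dotProduct_add] at hsum
    refine ⟨p, ⟨hp, fun y hy => ?_⟩, q, ⟨hq, fun y hy => ?_⟩, rfl⟩
    · linarith [hp₀max y hy]
    · linarith [hq₀max y hy]
  · rintro ⟨p, ⟨hp, hpmax⟩, q, ⟨hq, hqmax⟩, rfl⟩
    refine ⟨⟨p, hp, q, hq, rfl⟩, ?_⟩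
    rintro _ ⟨a, ha, b, hb, rfl⟩
    rw [dotProduct_add, dotProduct_add]
    exact add_le_add (hpmax a ha) (hqmax b hb)

end Argmax

section IterFaces

variable {d : ℕ} (c : Fin d → Fin d → ℝ)

theorem iterFaces_succ_of_lt (S : Set (Fin d → ℝ)) {i : ℕ} (h : i < d) :
    iterFaces c S (i + 1) = argmaxSet (c ⟨i, h⟩) (iterFaces c S i) :=
  dif_pos h

theorem iterFaces_succ_of_le (S : Set (Fin d → ℝ)) {i : ℕ} (h : d ≤ i) :
    iterFaces c S (i + 1) = iterFaces c S i :=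
  dif_neg h.not_gt

theorem iterFaces_antitone (S : Set (Fin d → ℝ)) : Antitone (iterFaces c S) := by
  refine antitone_nat_of_succ_le fun i => ?_
  rcases lt_or_ge i d with h | h
  · rw [iterFaces_succ_of_lt c S h]
    exact fun x hx => hx.1
  · rw [iterFaces_succ_of_le c S h]

theorem iterFaces_isCompact_nonempty {S : Set (Fin d → ℝ)} (hS : IsCompact S)
    (hne : S.Nonempty) (i : ℕ) :
    IsCompact (iterFaces c S i) ∧ (iterFaces c S i).Nonempty := by
  induction i with
  | zero => exact ⟨hS, hne⟩
  | succ i ih =>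
    rcases lt_or_ge i d with h | h
    · rw [iterFaces_succ_of_lt c S h]
      exact ⟨isCompact_argmaxSet ih.1 _, argmaxSet_nonempty ih.1 ih.2 _⟩
    · rwa [iterFaces_succ_of_le c S h]

theorem iterFaces_add {P Q : Set (Fin d → ℝ)} (hP : IsCompact P) (hPne : P.Nonempty)
    (hQ : IsCompact Q) (hQne : Q.Nonempty) (i : ℕ) :
    iterFaces c (P + Q) i = iterFaces c P i + iterFaces c Q i := by
  induction i with
  | zero => rfl
  | succ i ih =>
    rcases lt_or_ge i d with h | h
    · obtain ⟨hPi, hPine⟩ := iterFaces_isCompact_nonempty c hP hPne i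
      obtain ⟨hQi, hQine⟩ := iterFaces_isCompact_nonempty c hQ hQne i
      rw [iterFaces_succ_of_lt c _ h, iterFaces_succ_of_lt c _ h, iterFaces_succ_of_lt c _ h, ih,
        argmaxSet_add _ (argmaxSet_nonempty hPi hPine _) (argmaxSet_nonempty hQi hQine _)]
    · rwa [iterFaces_succ_of_le c _ h, iterFaces_succ_of_le c _ h, iterFaces_succ_of_le c _ h]

theorem dotProduct_eq_of_mem_iterFaces {S : Set (Fin d → ℝ)} {x y : Fin d → ℝ}
    (hx : x ∈ iterFaces c S d) (hy : y ∈ iterFaces c S d) (i : Fin d) :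
    c i ⬝ᵥ x = c i ⬝ᵥ y := by
  have hx' := iterFaces_antitone c S i.isLt hx
  have hy' := iterFaces_antitone c S i.isLt hy
  rw [iterFaces_succ_of_lt c S i.isLt] at hx' hy'
  exact le_antisymm (hy'.2 x hx'.1) (hx'.2 y hy'.1)

end IterFaces

theorem eq_of_forall_dotProduct_eq {R n ι : Type*} [CommRing R] [Fintype n] [DecidableEq n]
    {v : ι → n → R} (hv : Submodule.span R (Set.range v) = ⊤) {x y : n → R}
    (h : ∀ i, v i ⬝ᵥ x = v i ⬝ᵥ y) : x = y := by
  have hzero : (dotProductBilin R R).flip (x - y) = 0 :=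
    LinearMap.ext_on_range hv fun i => by simp [h i]
  funext j
  have hj := LinearMap.congr_fun hzero (Pi.single j 1)
  simpa [sub_eq_zero] using hj

theorem iterFaces_subsingleton {d : ℕ} {c : Fin d → Fin d → ℝ}
    (hc : Submodule.span ℝ (Set.range c) = ⊤) (S : Set (Fin d → ℝ)) :
    (iterFaces c S d).Subsingleton := fun _ hx _ hy =>
  eq_of_forall_dotProduct_eq hc (dotProduct_eq_of_mem_iterFaces c hx hy)

theorem exists_iterFaces_eq_singleton {d : ℕ} {c : Fin d → Fin d → ℝ}
    (hc : Submodule.span ℝ (Set.range c) = ⊤) {S : Set (Fin d → ℝ)} (hS : IsCompact S)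
    (hne : S.Nonempty) : ∃ x, iterFaces c S d = {x} := by
  obtain ⟨x, hx⟩ := (iterFaces_isCompact_nonempty c hS hne d).2
  exact ⟨x, (iterFaces_subsingleton hc S).eq_singleton_of_mem hx⟩

theorem IsPolytope.isCompact {d : ℕ} {P : Set (Fin d → ℝ)} (hP : IsPolytope P) : IsCompact P := by
  obtain ⟨V, -, rfl⟩ := hP
  exact V.finite_toSet.isCompact_convexHull (𝕜 := ℝ)

theorem IsPolytope.nonempty {d : ℕ} {P : Set (Fin d → ℝ)} (hP : IsPolytope P) : P.Nonempty := by
  obtain ⟨V, hV, rfl⟩ := hP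
  exact hV.to_set.mono (subset_convexHull ℝ _)

theorem lex_faces_singletons_general {d : ℕ} (P Q R : Set (Fin d → ℝ))
    (hP : IsPolytope P) (hQ : IsPolytope Q) (hPQR : P + Q = R)
    (c : Fin d → Fin d → ℝ)
    (hc : LinearIndependent ℝ c ∧ Submodule.span ℝ (Set.range c) = ⊤) :
    ∃ xP xQ xR : Fin d → ℝ,
      iterFaces c P d = {xP} ∧ iterFaces c Q d = {xQ} ∧ iterFaces c R d = {xR} ∧
      xP + xQ = xR := by
  obtain ⟨xP, hxP⟩ := exists_iterFaces_eq_singleton hc.2 hP.isCompact hP.nonempty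
  obtain ⟨xQ, hxQ⟩ := exists_iterFaces_eq_singleton hc.2 hQ.isCompact hQ.nonempty
  refine ⟨xP, xQ, xP + xQ, hxP, hxQ, ?_, rfl⟩
  rw [← hPQR, iterFaces_add c hP.isCompact hP.nonempty hQ.isCompact hQ.nonempty, hxP, hxQ,
    Set.singleton_add_singleton]

/-- for polytopes `P + Q = R` and a basis `c_1, …, c_d` of `ℝ^d`, the iterated
(lexicographic) face sets `F^P_d`, `F^Q_d`, `F^R_d` are singletons `{xP}`, `{xQ}`, `{xR}`
with `xP + xQ = xR`. -/
theorem lex_faces_singletons {d : ℕ} (P Q R : Set (Fin d → ℝ))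
    (hP : IsPolytope P) (hQ : IsPolytope Q) (hR : IsPolytope R) (hPQR : P + Q = R)
    (c : Fin d → Fin d → ℝ)
    (hc : LinearIndependent ℝ c ∧ Submodule.span ℝ (Set.range c) = ⊤) :
    ∃ xP xQ xR : Fin d → ℝ,
      iterFaces c P d = {xP} ∧ iterFaces c Q d = {xQ} ∧ iterFaces c R d = {xR} ∧
      xP + xQ = xR :=
  lex_faces_singletons_general P Q R hP hQ hPQR c hc
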